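/- There is a constant C₀ > 0 and, for each r ∈ (0,π/4), constants C₁ = C₁(r) > 0 and ε₀ = ε₀(r) > 0 such that the following holds. For every v = (1−s)(cos t·p + sin t·N) with p, N ∈ S³, ⟨p,N⟩ = 0, 0 < s ≤ ε₀ and |t| ≤ ε₀, one has B⁴_{R̄ − C₀√|(s,t)|}(Q̄) ∩ S³ ⊂ F_v(B⁴_{√2}(−N) ∩ S³) ⊂ B⁴_{R̄ + C₀√|(s,t)|}(Q̄) ∩ S³, and F_v(Δ(p,N,r) ∩ S³) ⊂ B⁴_{R̄ + C₁√|(s,t)|}(Q̄) \ B⁴_{R̄ − C₁√|(s,t)|}(Q̄), where Q̄ = −((t/s)/√(1+(t/s)²))·p − (1/√(1+(t/s)²))·N and R̄ = √(2(1 − (t/s)/√(1+(t/s)²))). -/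

import Mathlib

noncomputable section

open Metric
open scoped RealInnerProductSpace

/-- Euclidean four-space `ℝ⁴`. -/
abbrev E4 : Type := EuclideanSpace ℝ (Fin 4)

/-- The round unit three-sphere `S³ ⊆ ℝ⁴`. -/
def S3 : Set E4 := Metric.sphere 0 1

/-- The conformal transformation `F_v(x) = ((1-|v|²)/|x-v|²)(x-v) - v` of `S³`,
for `v` in the open unit ball `B⁴`. -/
def confMap (v x : E4) : E4 := ((1 - ‖v‖ ^ 2) / ‖x - v‖ ^ 2) • (x - v) - v

/-- For `p, N ∈ S³` with `⟪p,N⟫ = 0` and `r > 0`, the region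
`Δ(p,N,r) = S³ \ (B_r((cos r)p + (sin r)N) ∪ B_r((cos r)p - (sin r)N))`, the complement
in `S³` of the two geodesic balls of radius `r` centered at `(cos r)p ± (sin r)N`
(expressed via the identity `B_r(q) = B⁴_{√(2(1-cos r))}(q) ∩ S³`). -/
def capDelta (p N : E4) (r : ℝ) : Set E4 :=
  S3 \ (Metric.ball (Real.cos r • p + Real.sin r • N) (Real.sqrt (2 * (1 - Real.cos r))) ∪
        Metric.ball (Real.cos r • p - Real.sin r • N) (Real.sqrt (2 * (1 - Real.cos r))))

/-- The point `Q̄ = -((t/s)/√(1+(t/s)²))·p - (1/√(1+(t/s)²))·N`. -/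
def Qbar (p N : E4) (s t : ℝ) : E4 :=
  (-(t / s / Real.sqrt (1 + (t / s) ^ 2))) • p - (1 / Real.sqrt (1 + (t / s) ^ 2)) • N

/-- The radius `R̄ = √(2(1 - (t/s)/√(1+(t/s)²)))`. -/
def Rbar (s t : ℝ) : ℝ := Real.sqrt (2 * (1 - t / s / Real.sqrt (1 + (t / s) ^ 2)))

/-!
`F_v` maps the hemisphere `{x ∈ S³ | ⟪x, N⟫ < 0}` onto the cap `{y ∈ S³ | E_v(y) < 0}`, where
`E_v(y) = (1 - |v|²)⟪y, N⟫ + 2⟪v, N⟫(1 + ⟪y, v⟫)` is affine in `y`; indeed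
`E_v(F_v x) |x - v|² = (1 - |v|²)² ⟪x, N⟫`. For `v = (1 - s)(cos t p + sin t N)` and
`ρ = |(s, t)|`, the first-order part of `E_v(y)` is `ρ (|y - Q̄|² - R̄²) = 2t⟪y, p⟫ + 2s⟪y, N⟫ + 2t`,
so the two differ by `O(ρ²)` and the image cap is squeezed between the spheres about `Q̄` of squared
radii `R̄² ± O(ρ)`, which lie between the radii `R̄ ± 4√ρ`. On `Δ(p, N, r)` one has
`|x - v|² ≥ s² + (r/2)|⟪x, N⟫|`, so the identity gives `|E_v(F_v x)| ≤ 8s²/r`, hence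
`||F_v x - Q̄|² - R̄²| = O(ρ/r)`.
-/

open Real

lemma lt_add_of_sq_lt_sq_add_sq {d R c : ℝ} (hR : 0 ≤ R) (hc : 0 ≤ c)
    (h : d ^ 2 < R ^ 2 + c ^ 2) : d < R + c :=
  lt_of_pow_lt_pow_left₀ 2 (by positivity) (by nlinarith)

lemma sub_le_of_sq_sub_sq_le {d R c : ℝ} (hd : 0 ≤ d) (hc : 0 ≤ c)
    (h : R ^ 2 - c ^ 2 ≤ d ^ 2) : R - c ≤ d := by
  by_contra! hlt
  nlinarith

lemma mem_S3 {x : E4} : x ∈ S3 ↔ ‖x‖ = 1 := mem_sphere_zero_iff_norm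

section UnitVectors

variable {F : Type*} [NormedAddCommGroup F] [InnerProductSpace ℝ F]

lemma norm_sub_sq_of_norm_eq_one {x y : F} (hx : ‖x‖ = 1) (hy : ‖y‖ = 1) :
    ‖x - y‖ ^ 2 = 2 - 2 * ⟪x, y⟫ := by
  rw [norm_sub_sq_real, hx, hy]; ring

lemma mem_ball_sqrt_iff_lt_inner {x q : F} (hx : ‖x‖ = 1) (hq : ‖q‖ = 1) (c : ℝ) :
    x ∈ ball q √(2 * (1 - c)) ↔ c < ⟪x, q⟫ := by
  rw [mem_ball, dist_eq_norm, lt_sqrt (norm_nonneg _), norm_sub_sq_of_norm_eq_one hx hq]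
  constructor <;> intro h <;> linarith

lemma mem_ball_neg_sqrt_two_iff {x q : F} (hx : ‖x‖ = 1) (hq : ‖q‖ = 1) :
    x ∈ ball (-q) √2 ↔ ⟪x, q⟫ < 0 := by
  have h := mem_ball_sqrt_iff_lt_inner hx (by rwa [norm_neg]) 0
  rw [sub_zero, mul_one, inner_neg_right, lt_neg, neg_zero] at h
  exact h

lemma norm_smul_add_smul_sq {p N : F} (hp : ‖p‖ = 1) (hN : ‖N‖ = 1) (hpN : ⟪p, N⟫ = 0)
    (a b : ℝ) : ‖a • p + b • N‖ ^ 2 = a ^ 2 + b ^ 2 := by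
  rw [norm_add_sq_real, norm_smul, norm_smul, real_inner_smul_left, real_inner_smul_right, hpN,
    hp, hN, norm_eq_abs, norm_eq_abs]
  simp [sq_abs]

end UnitVectors

section ConfMap

variable {v x : E4}

lemma norm_sub_pos_of_norm_lt (hx : ‖x‖ = 1) (hv : ‖v‖ < 1) : 0 < ‖x - v‖ := by
  linarith [norm_sub_norm_le x v]

lemma inner_confMap_mul_norm_sub_sq (hx : ‖x‖ = 1) (hv : ‖v‖ < 1) (w : E4) :
    ⟪confMap v x, w⟫ * ‖x - v‖ ^ 2 = (1 - ‖v‖ ^ 2) * (⟪x, w⟫ - ⟪v, w⟫) - ⟪v, w⟫ * ‖x - v‖ ^ 2 := by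
  have hD := (norm_sub_pos_of_norm_lt hx hv).ne'
  rw [confMap, inner_sub_left, real_inner_smul_left, inner_sub_left]
  field_simp

lemma norm_confMap (hx : ‖x‖ = 1) (hv : ‖v‖ < 1) : ‖confMap v x‖ = 1 := by
  have hD := (norm_sub_pos_of_norm_lt hx hv).ne'
  have hxv : ⟪x, v⟫ = (1 + ‖v‖ ^ 2 - ‖x - v‖ ^ 2) / 2 := by rw [norm_sub_sq_real, hx]; ring
  have hsq : ‖confMap v x‖ ^ 2 = 1 := by
    rw [confMap, norm_sub_sq_real, norm_smul, real_inner_smul_left, inner_sub_left,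
      real_inner_self_eq_norm_sq, mul_pow, norm_eq_abs, sq_abs, hxv]
    field_simp
    ring
  exact (pow_eq_one_iff_of_nonneg (norm_nonneg _) two_ne_zero).mp hsq

lemma confMap_neg_confMap (hx : ‖x‖ = 1) (hv : ‖v‖ < 1) : confMap (-v) (confMap v x) = x := by
  have hD := (norm_sub_pos_of_norm_lt hx hv).ne'
  have hσ : 1 - ‖v‖ ^ 2 ≠ 0 := by nlinarith [norm_nonneg v]
  set k := (1 - ‖v‖ ^ 2) / ‖x - v‖ ^ 2 with hk
  have hsub : confMap v x - -v = k • (x - v) := by rw [confMap]; abel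
  rw [confMap, hsub, norm_neg, norm_smul, mul_pow, norm_eq_abs, sq_abs, smul_smul]
  have : (1 - ‖v‖ ^ 2) / (k ^ 2 * ‖x - v‖ ^ 2) * k = 1 := by
    rw [hk]; field_simp
  rw [this, one_smul]; abel

end ConfMap

section CapForm

variable {v x : E4}

/-- `capForm v w y = ⟪F_{-v} y, w⟫ ‖y + v‖²` for `y ∈ S³`. -/
def capForm (v w y : E4) : ℝ := (1 - ‖v‖ ^ 2) * ⟪y, w⟫ + 2 * ⟪v, w⟫ * (1 + ⟪y, v⟫)

lemma capForm_confMap_mul_norm_sub_sq (hx : ‖x‖ = 1) (hv : ‖v‖ < 1) (w : E4) :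
    capForm v w (confMap v x) * ‖x - v‖ ^ 2 = (1 - ‖v‖ ^ 2) ^ 2 * ⟪x, w⟫ := by
  have hw := inner_confMap_mul_norm_sub_sq hx hv w
  have hvv := inner_confMap_mul_norm_sub_sq hx hv v
  have hD : ‖x - v‖ ^ 2 = 1 - 2 * ⟪x, v⟫ + ‖v‖ ^ 2 := by rw [norm_sub_sq_real, hx]; ring
  rw [real_inner_self_eq_norm_sq] at hvv
  rw [capForm]
  linear_combination (1 - ‖v‖ ^ 2) * hw + 2 * ⟪v, w⟫ * hvv + (1 - ‖v‖ ^ 2) * ⟪v, w⟫ * hD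

lemma capForm_confMap_neg_iff (hx : ‖x‖ = 1) (hv : ‖v‖ < 1) (w : E4) :
    capForm v w (confMap v x) < 0 ↔ ⟪x, w⟫ < 0 := by
  have h := capForm_confMap_mul_norm_sub_sq hx hv w
  have hD := pow_pos (norm_sub_pos_of_norm_lt hx hv) 2
  have hσ : 0 < (1 - ‖v‖ ^ 2) ^ 2 := pow_pos (by nlinarith [norm_nonneg v]) 2
  constructor <;> intro hneg <;> nlinarith

lemma mem_image_hemisphere_iff {y : E4} (hy : ‖y‖ = 1) (hv : ‖v‖ < 1) (w : E4) :
    y ∈ confMap v '' {x ∈ S3 | ⟪x, w⟫ < 0} ↔ capForm v w y < 0 := by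
  constructor
  · rintro ⟨x, ⟨hx, hxw⟩, rfl⟩
    exact (capForm_confMap_neg_iff (mem_S3.mp hx) hv w).mpr hxw
  · intro hy_neg
    have hv' : ‖-v‖ < 1 := by rwa [norm_neg]
    have hinv : confMap v (confMap (-v) y) = y := by
      simpa using confMap_neg_confMap hy hv'
    have hx := norm_confMap hy hv'
    refine ⟨confMap (-v) y, ⟨mem_S3.mpr hx, ?_⟩, hinv⟩
    rwa [← capForm_confMap_neg_iff hx hv, hinv]

end CapForm

lemma ball_neg_sqrt_two_inter_S3 {N : E4} (hN : ‖N‖ = 1) :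
    ball (-N) √2 ∩ S3 = {x ∈ S3 | ⟪x, N⟫ < 0} := by
  ext x
  constructor
  · rintro ⟨hball, hx⟩
    exact ⟨hx, (mem_ball_neg_sqrt_two_iff (mem_S3.mp hx) hN).mp hball⟩
  · rintro ⟨hx, hxN⟩
    exact ⟨(mem_ball_neg_sqrt_two_iff (mem_S3.mp hx) hN).mpr hxN, hx⟩

def polarPoint (p N : E4) (s t : ℝ) : E4 := (1 - s) • (cos t • p + sin t • N)

section PolarPoint

variable {p N : E4} {s t : ℝ}

lemma inner_polarPoint (y : E4) :
    ⟪y, polarPoint p N s t⟫ = (1 - s) * cos t * ⟪y, p⟫ + (1 - s) * sin t * ⟪y, N⟫ := by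
  simp only [polarPoint, inner_smul_right, inner_add_right]; ring

lemma norm_polarPoint_sq (hp : ‖p‖ = 1) (hN : ‖N‖ = 1) (hpN : ⟪p, N⟫ = 0) :
    ‖polarPoint p N s t‖ ^ 2 = (1 - s) ^ 2 := by
  rw [polarPoint, norm_smul, mul_pow, norm_smul_add_smul_sq hp hN hpN, cos_sq_add_sin_sq,
    norm_eq_abs, sq_abs]
  ring

lemma norm_polarPoint_lt_one (hp : ‖p‖ = 1) (hN : ‖N‖ = 1) (hpN : ⟪p, N⟫ = 0) (hs : 0 < s)
    (hs2 : s < 2) : ‖polarPoint p N s t‖ < 1 := by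
  have h := norm_polarPoint_sq (s := s) (t := t) hp hN hpN
  nlinarith [norm_nonneg (polarPoint p N s t)]

lemma capForm_polarPoint (hp : ‖p‖ = 1) (hN : ‖N‖ = 1) (hpN : ⟪p, N⟫ = 0) (y : E4) :
    capForm (polarPoint p N s t) N y = (1 - (1 - s) ^ 2) * ⟪y, N⟫
      + 2 * ((1 - s) * sin t) * (1 + (1 - s) * cos t * ⟪y, p⟫ + (1 - s) * sin t * ⟪y, N⟫) := by
  have hvN : ⟪polarPoint p N s t, N⟫ = (1 - s) * sin t := by
    rw [real_inner_comm, inner_polarPoint, real_inner_comm, hpN, real_inner_self_eq_norm_sq, hN]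
    ring
  rw [capForm, norm_polarPoint_sq hp hN hpN, inner_polarPoint, hvN, add_assoc 1]

lemma abs_capForm_polarPoint_coords_sub_le {s t ρ u w : ℝ} (hs : 0 ≤ s) (hsρ : s ≤ ρ)
    (htρ : |t| ≤ ρ) (hρ : ρ ≤ 1) (hu : |u| ≤ 1) (hw : |w| ≤ 1) :
    |(1 - (1 - s) ^ 2) * w + 2 * ((1 - s) * sin t) * (1 + (1 - s) * cos t * u + (1 - s) * sin t * w)
      - (2 * t * u + 2 * s * w + 2 * t)| ≤ 15 * ρ ^ 2 := by
  set a := (1 - s) * cos t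
  set b := (1 - s) * sin t
  have hρ0 : 0 ≤ ρ := hs.trans hsρ
  have hs1 : |1 - s| ≤ 1 := abs_le.mpr ⟨by linarith, by linarith⟩
  have ht3 : |t| ^ 3 ≤ ρ ^ 2 := by
    have := pow_le_pow_left₀ (abs_nonneg t) htρ 3
    nlinarith [sq_nonneg ρ]
  have hsin : |sin t| ≤ |t| := abs_sin_le_abs
  have ha : |a| ≤ 1 := by
    rw [abs_mul]; exact mul_le_one₀ hs1 (abs_nonneg _) (abs_cos_le_one t)
  have hb : |b| ≤ ρ := by
    rw [abs_mul]; nlinarith [abs_nonneg (1 - s), abs_nonneg (sin t)]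
  have ha1 : |a - 1| ≤ 2 * ρ := by
    have hcos : 1 - t ^ 2 / 2 ≤ cos t := one_sub_sq_div_two_le_cos
    have ht2 : t ^ 2 ≤ ρ := by nlinarith [sq_abs t, abs_nonneg t]
    rw [abs_le]; constructor <;> nlinarith [cos_le_one t, neg_one_le_cos t]
  have hbt : |b - t| ≤ 2 * ρ ^ 2 := by
    calc |b - t| = |(sin t - t) - s * sin t| := by congr 1; simp only [b]; ring
      _ ≤ |sin t - t| + |s * sin t| := abs_sub _ _
      _ ≤ |t| ^ 3 / 6 + s * |t| := by
          rw [abs_sub_comm, abs_mul, abs_of_nonneg hs]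
          gcongr
          exact abs_sub_sin_le t
      _ ≤ 2 * ρ ^ 2 := by nlinarith [abs_nonneg t]
  have hab : |a * b - t| ≤ 4 * ρ ^ 2 := by
    calc |a * b - t| = |a * (b - t) + t * (a - 1)| := by ring_nf
      _ ≤ |a| * |b - t| + |t| * |a - 1| := by
          rw [← abs_mul, ← abs_mul]; exact abs_add_le _ _
      _ ≤ 1 * (2 * ρ ^ 2) + ρ * (2 * ρ) := by gcongr
      _ = 4 * ρ ^ 2 := by ring
  have hbs : |2 * b ^ 2 - s ^ 2| ≤ 3 * ρ ^ 2 := by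
    rw [abs_le]; constructor <;> nlinarith [sq_abs b, abs_nonneg b]
  calc _ = |(2 * b ^ 2 - s ^ 2) * w + 2 * (b - t) + 2 * (a * b - t) * u| := by ring_nf
    _ ≤ |2 * b ^ 2 - s ^ 2| * |w| + 2 * |b - t| + 2 * |a * b - t| * |u| := by
        refine (abs_add_three _ _ _).trans_eq ?_
        simp only [abs_mul, abs_two]
    _ ≤ 3 * ρ ^ 2 * 1 + 2 * (2 * ρ ^ 2) + 2 * (4 * ρ ^ 2) * 1 := by gcongr
    _ = 15 * ρ ^ 2 := by ring

lemma sqrt_one_add_div_sq (hs : 0 < s) : √(1 + (t / s) ^ 2) = √(s ^ 2 + t ^ 2) / s := by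
  have h : 1 + (t / s) ^ 2 = (s ^ 2 + t ^ 2) / s ^ 2 := by field_simp
  rw [h, sqrt_div' _ (sq_nonneg s), sqrt_sq hs.le]

lemma Qbar_eq (hs : 0 < s) :
    Qbar p N s t = (-(t / √(s ^ 2 + t ^ 2))) • p + (-(s / √(s ^ 2 + t ^ 2))) • N := by
  have hρ : 0 < √(s ^ 2 + t ^ 2) := sqrt_pos.mpr (by positivity)
  rw [Qbar, sqrt_one_add_div_sq hs, sub_eq_add_neg, ← neg_smul]
  congr 3 <;> field_simp

lemma Rbar_sq (hs : 0 < s) : Rbar s t ^ 2 = 2 - 2 * (t / √(s ^ 2 + t ^ 2)) := by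
  have hρ : 0 < √(s ^ 2 + t ^ 2) := sqrt_pos.mpr (by positivity)
  have ht : t ≤ √(s ^ 2 + t ^ 2) := (le_abs_self t).trans (abs_le_sqrt (by nlinarith))
  have hdiv : t / s / √(1 + (t / s) ^ 2) = t / √(s ^ 2 + t ^ 2) := by
    rw [sqrt_one_add_div_sq hs]; field_simp
  rw [Rbar, hdiv, sq_sqrt]
  · ring
  · have : t / √(s ^ 2 + t ^ 2) ≤ 1 := (div_le_one hρ).mpr ht
    linarith

lemma mul_norm_sub_Qbar_sq_sub_Rbar_sq (hp : ‖p‖ = 1) (hN : ‖N‖ = 1) (hpN : ⟪p, N⟫ = 0)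
    (hs : 0 < s) {y : E4} (hy : ‖y‖ = 1) :
    √(s ^ 2 + t ^ 2) * (‖y - Qbar p N s t‖ ^ 2 - Rbar s t ^ 2)
      = 2 * t * ⟪y, p⟫ + 2 * s * ⟪y, N⟫ + 2 * t := by
  set ρ := √(s ^ 2 + t ^ 2)
  have hρ : 0 < ρ := sqrt_pos.mpr (by positivity)
  have hρsq : ρ ^ 2 = s ^ 2 + t ^ 2 := sq_sqrt (by positivity)
  have hQ : ‖Qbar p N s t‖ = 1 := by
    have h := norm_smul_add_smul_sq hp hN hpN (-(t / ρ)) (-(s / ρ))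
    rw [← Qbar_eq hs] at h
    refine (pow_eq_one_iff_of_nonneg (norm_nonneg _) two_ne_zero).mp (h.trans ?_)
    field_simp
    linarith
  rw [norm_sub_sq_of_norm_eq_one hy hQ, Rbar_sq hs, Qbar_eq hs, inner_add_right,
    real_inner_smul_right, real_inner_smul_right]
  field_simp
  ring

lemma abs_mul_norm_sub_Qbar_sq_sub_capForm_le (hp : ‖p‖ = 1) (hN : ‖N‖ = 1) (hpN : ⟪p, N⟫ = 0)
    (hs : 0 < s) (hst : s ^ 2 + t ^ 2 ≤ 1) {y : E4} (hy : ‖y‖ = 1) :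
    |√(s ^ 2 + t ^ 2) * (‖y - Qbar p N s t‖ ^ 2 - Rbar s t ^ 2)
      - capForm (polarPoint p N s t) N y| ≤ 15 * (s ^ 2 + t ^ 2) := by
  have hu : |⟪y, p⟫| ≤ 1 := by simpa [hy, hp] using abs_real_inner_le_norm y p
  have hw : |⟪y, N⟫| ≤ 1 := by simpa [hy, hN] using abs_real_inner_le_norm y N
  have hsρ : s ≤ √(s ^ 2 + t ^ 2) := (le_abs_self s).trans (abs_le_sqrt (by nlinarith))
  have htρ : |t| ≤ √(s ^ 2 + t ^ 2) := abs_le_sqrt (by nlinarith)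
  rw [mul_norm_sub_Qbar_sq_sub_Rbar_sq hp hN hpN hs hy, capForm_polarPoint hp hN hpN, abs_sub_comm,
    ← sq_sqrt (by positivity : 0 ≤ s ^ 2 + t ^ 2)]
  exact abs_capForm_polarPoint_coords_sub_le hs.le hsρ htρ (sqrt_le_one.mpr hst) hu hw

lemma inner_add_sin_mul_abs_inner_le_one_of_mem_capDelta (hp : ‖p‖ = 1) (hN : ‖N‖ = 1)
    (hpN : ⟪p, N⟫ = 0) {r : ℝ} (hr0 : 0 < r) (hr : r < π / 2) {x : E4}
    (hx : x ∈ capDelta p N r) : ⟪x, p⟫ + sin r * |⟪x, N⟫| ≤ 1 := by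
  obtain ⟨hxS, hnot⟩ := hx
  have hx1 := mem_S3.mp hxS
  have inner_le (b : ℝ) (hb : b ^ 2 = sin r ^ 2)
      (hxq : x ∉ ball (cos r • p + b • N) √(2 * (1 - cos r))) :
      cos r * ⟪x, p⟫ + b * ⟪x, N⟫ ≤ cos r := by
    have hq : ‖cos r • p + b • N‖ = 1 := by
      have h := norm_smul_add_smul_sq hp hN hpN (cos r) b
      rw [hb, cos_sq_add_sin_sq] at h
      exact (pow_eq_one_iff_of_nonneg (norm_nonneg _) two_ne_zero).mp h
    rw [mem_ball_sqrt_iff_lt_inner hx1 hq, not_lt, inner_add_right, real_inner_smul_right,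
      real_inner_smul_right] at hxq
    exact hxq
  have hplus := inner_le (sin r) rfl fun h => hnot (Or.inl h)
  have hminus := inner_le (-sin r) (neg_sq _) fun h =>
    hnot (Or.inr (by rwa [neg_smul, ← sub_eq_add_neg] at h))
  have hcap : cos r * ⟪x, p⟫ + sin r * |⟪x, N⟫| ≤ cos r := by
    rcases abs_cases ⟪x, N⟫ with ⟨h, _⟩ | ⟨h, _⟩ <;> rw [h] <;> linarith
  have hcos : 0 < cos r := cos_pos_of_mem_Ioo ⟨by linarith, hr⟩
  have hsin : 0 ≤ sin r := sin_nonneg_of_nonneg_of_le_pi hr0.le (by linarith [pi_pos])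
  nlinarith [cos_le_one r, mul_nonneg hsin (abs_nonneg ⟪x, N⟫)]

lemma sq_add_mul_abs_inner_le_norm_sub_polarPoint_sq (hp : ‖p‖ = 1) (hN : ‖N‖ = 1)
    (hpN : ⟪p, N⟫ = 0) {r : ℝ} (hr0 : 0 < r) (hr1 : r < 1) (hsr : s ≤ r / 8)
    (htr : |t| ≤ r / 8) {x : E4} (hx : x ∈ capDelta p N r) :
    s ^ 2 + r / 2 * |⟪x, N⟫| ≤ ‖x - polarPoint p N s t‖ ^ 2 := by
  have hx1 := mem_S3.mp hx.1
  have hxp := inner_add_sin_mul_abs_inner_le_one_of_mem_capDelta hp hN hpN hr0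
    (by linarith [pi_gt_three]) hx
  have hxN : |⟪x, N⟫| ≤ 1 := by simpa [hx1, hN] using abs_real_inner_le_norm x N
  have hsin_r : 5 * r / 6 ≤ sin r := by
    have hr3 : r ^ 3 ≤ r := by nlinarith [mul_pos hr0 hr0]
    linarith [sin_gt_sub_cube hr0]
  have hsin_t : sin t * ⟪x, N⟫ ≤ |t| * |⟪x, N⟫| := by
    calc sin t * ⟪x, N⟫ ≤ |sin t * ⟪x, N⟫| := le_abs_self _
      _ ≤ |t| * |⟪x, N⟫| := by
          rw [abs_mul]; exact mul_le_mul_of_nonneg_right abs_sin_le_abs (abs_nonneg _)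
  have hcos_t : cos t * ⟪x, p⟫ ≤ 1 - sin r * |⟪x, N⟫| := by
    have hcos0 : 0 ≤ cos t := cos_nonneg_of_mem_Icc ⟨by linarith [neg_abs_le t, pi_gt_three],
      by linarith [le_abs_self t, pi_gt_three]⟩
    have : 0 ≤ 1 - sin r * |⟪x, N⟫| := by nlinarith [sin_le_one r, abs_nonneg ⟪x, N⟫]
    nlinarith [cos_le_one t]
  have hD : ‖x - polarPoint p N s t‖ ^ 2
      = 2 - 2 * s + s ^ 2 - 2 * (1 - s) * (cos t * ⟪x, p⟫ + sin t * ⟪x, N⟫) := by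
    rw [norm_sub_sq_real, hx1, norm_polarPoint_sq hp hN hpN, inner_polarPoint]; ring
  have hsum : cos t * ⟪x, p⟫ + sin t * ⟪x, N⟫ ≤ 1 - r / 2 * |⟪x, N⟫| := by
    nlinarith [mul_nonneg (by linarith : 0 ≤ sin r - |t| - r / 2) (abs_nonneg ⟪x, N⟫)]
  rw [hD]
  nlinarith [mul_le_mul_of_nonneg_left hsum (by linarith : 0 ≤ 1 - s),
    mul_nonneg (by linarith : 0 ≤ 1 / 2 - s) (mul_nonneg hr0.le (abs_nonneg ⟪x, N⟫))]

lemma abs_capForm_confMap_mul_le_of_mem_capDelta (hp : ‖p‖ = 1) (hN : ‖N‖ = 1)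
    (hpN : ⟪p, N⟫ = 0) {r : ℝ} (hr0 : 0 < r) (hr1 : r < 1) (hs : 0 < s) (hsr : s ≤ r / 8)
    (htr : |t| ≤ r / 8) {x : E4} (hx : x ∈ capDelta p N r) :
    |capForm (polarPoint p N s t) N
      (confMap (polarPoint p N s t) x)| * r ≤ 8 * s ^ 2 := by
  set v := polarPoint p N s t
  set E := capForm v N (confMap v x)
  have hx1 := mem_S3.mp hx.1
  have hv := norm_polarPoint_lt_one (t := t) hp hN hpN hs (by linarith)
  have hD := sq_add_mul_abs_inner_le_norm_sub_polarPoint_sq hp hN hpN hr0 hr1 hsr htr hx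
  have hσ : (1 - (1 - s) ^ 2) ^ 2 ≤ 4 * s ^ 2 := by
    nlinarith [mul_nonneg (pow_nonneg hs.le 3) (by linarith : 0 ≤ 4 - s)]
  have habs : |E| * ‖x - v‖ ^ 2 = (1 - (1 - s) ^ 2) ^ 2 * |⟪x, N⟫| := by
    have h := congrArg abs (capForm_confMap_mul_norm_sub_sq hx1 hv N)
    rwa [norm_polarPoint_sq hp hN hpN, abs_mul, abs_mul, abs_sq, abs_sq] at h
  have hbound : |E| * (s ^ 2 + r / 2 * |⟪x, N⟫|) ≤ 4 * s ^ 2 * |⟪x, N⟫| :=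
    calc |E| * (s ^ 2 + r / 2 * |⟪x, N⟫|) ≤ |E| * ‖x - v‖ ^ 2 := by gcongr
      _ ≤ 4 * s ^ 2 * |⟪x, N⟫| := by rw [habs]; gcongr
  rcases (abs_nonneg ⟪x, N⟫).eq_or_lt with hxN | hxN
  · have hE : |E| * s ^ 2 ≤ 0 := by simpa [← hxN] using hbound
    have : |E| = 0 := le_antisymm (nonpos_of_mul_nonpos_left hE (by positivity)) (abs_nonneg E)
    rw [this, zero_mul]; positivity
  · nlinarith [mul_nonneg (abs_nonneg E) (sq_nonneg s)]

lemma ball_Qbar_inter_S3_subset_image (hp : ‖p‖ = 1) (hN : ‖N‖ = 1) (hpN : ⟪p, N⟫ = 0)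
    (hs : 0 < s) (hst : s ^ 2 + t ^ 2 ≤ 1) :
    ball (Qbar p N s t) (Rbar s t - 4 * √√(s ^ 2 + t ^ 2)) ∩ S3 ⊆
      confMap (polarPoint p N s t) '' (ball (-N) √2 ∩ S3) := by
  rintro y ⟨hyQ, hy⟩
  have hv := norm_polarPoint_lt_one (t := t) hp hN hpN hs (by nlinarith)
  rw [ball_neg_sqrt_two_inter_S3 hN, mem_image_hemisphere_iff (mem_S3.mp hy) hv]
  by_contra! hE
  have happrox := (abs_le.mp (abs_mul_norm_sub_Qbar_sq_sub_capForm_le hp hN hpN hs hst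
    (mem_S3.mp hy))).1
  set ρ := √(s ^ 2 + t ^ 2)
  have hρ : 0 < ρ := sqrt_pos.mpr (by positivity)
  have hρsq : ρ ^ 2 = s ^ 2 + t ^ 2 := sq_sqrt (by positivity)
  have hfar : Rbar s t ^ 2 - (4 * √ρ) ^ 2 ≤ ‖y - Qbar p N s t‖ ^ 2 := by
    rw [mul_pow, sq_sqrt hρ.le]
    nlinarith
  rw [mem_ball, dist_eq_norm] at hyQ
  exact (sub_le_of_sq_sub_sq_le (norm_nonneg _) (by positivity) hfar).not_gt hyQ

lemma image_subset_ball_Qbar_inter_S3 (hp : ‖p‖ = 1) (hN : ‖N‖ = 1) (hpN : ⟪p, N⟫ = 0)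
    (hs : 0 < s) (hst : s ^ 2 + t ^ 2 ≤ 1) :
    confMap (polarPoint p N s t) '' (ball (-N) √2 ∩ S3) ⊆
      ball (Qbar p N s t) (Rbar s t + 4 * √√(s ^ 2 + t ^ 2)) ∩ S3 := by
  rintro _ ⟨x, hx, rfl⟩
  have hv := norm_polarPoint_lt_one (t := t) hp hN hpN hs (by nlinarith)
  rw [ball_neg_sqrt_two_inter_S3 hN] at hx
  have hy := norm_confMap (mem_S3.mp hx.1) hv
  have hE := (mem_image_hemisphere_iff hy hv N).mp ⟨x, hx, rfl⟩
  have happrox := (abs_le.mp (abs_mul_norm_sub_Qbar_sq_sub_capForm_le hp hN hpN hs hst hy)).2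
  set ρ := √(s ^ 2 + t ^ 2)
  set y := confMap (polarPoint p N s t) x
  have hρ : 0 < ρ := sqrt_pos.mpr (by positivity)
  have hρsq : ρ ^ 2 = s ^ 2 + t ^ 2 := sq_sqrt (by positivity)
  have hnear : ‖y - Qbar p N s t‖ ^ 2 < Rbar s t ^ 2 + (4 * √ρ) ^ 2 := by
    rw [mul_pow, sq_sqrt hρ.le]
    nlinarith
  refine ⟨?_, mem_S3.mpr hy⟩
  rw [mem_ball, dist_eq_norm]
  exact lt_add_of_sq_lt_sq_add_sq (sqrt_nonneg _) (by positivity) hnear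

lemma image_capDelta_subset_annulus (hp : ‖p‖ = 1) (hN : ‖N‖ = 1) (hpN : ⟪p, N⟫ = 0)
    {r : ℝ} (hr0 : 0 < r) (hr1 : r < 1) (hs : 0 < s) (hsr : s ≤ r / 8) (htr : |t| ≤ r / 8) :
    confMap (polarPoint p N s t) '' (capDelta p N r ∩ S3) ⊆
      ball (Qbar p N s t) (Rbar s t + 5 / √r * √√(s ^ 2 + t ^ 2)) \
        ball (Qbar p N s t) (Rbar s t - 5 / √r * √√(s ^ 2 + t ^ 2)) := by
  rintro _ ⟨x, ⟨hx, -⟩, rfl⟩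
  have hst : s ^ 2 + t ^ 2 ≤ 1 := by nlinarith [sq_abs t, abs_nonneg t]
  have hv := norm_polarPoint_lt_one (t := t) hp hN hpN hs (by linarith)
  have hy := norm_confMap (mem_S3.mp hx.1) hv
  have hE := abs_capForm_confMap_mul_le_of_mem_capDelta hp hN hpN hr0 hr1 hs hsr htr hx
  have happrox := abs_mul_norm_sub_Qbar_sq_sub_capForm_le hp hN hpN hs hst hy
  set ρ := √(s ^ 2 + t ^ 2)
  set y := confMap (polarPoint p N s t) x
  set X := ‖y - Qbar p N s t‖ ^ 2 - Rbar s t ^ 2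
  have hρ : 0 < ρ := sqrt_pos.mpr (by positivity)
  have hρsq : ρ ^ 2 = s ^ 2 + t ^ 2 := sq_sqrt (by positivity)
  have hdev : |X| * r ≤ 23 * ρ := by
    have h := abs_sub_abs_le_abs_sub (ρ * X) (capForm (polarPoint p N s t) N y)
    rw [abs_mul, abs_of_pos hρ] at h
    nlinarith
  have hc : (5 / √r * √ρ) ^ 2 = 25 * ρ / r := by
    rw [mul_pow, div_pow, sq_sqrt hr0.le, sq_sqrt hρ.le]; ring
  have h23 : 23 * ρ / r < 25 * ρ / r := by gcongr; norm_num
  obtain ⟨hlow, hhigh⟩ := abs_le.mp ((le_div_iff₀ hr0).mpr hdev)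
  constructor
  · rw [mem_ball, dist_eq_norm]
    refine lt_add_of_sq_lt_sq_add_sq (sqrt_nonneg _) (by positivity) ?_
    linarith
  · rw [mem_ball, dist_eq_norm, not_lt]
    refine sub_le_of_sq_sub_sq_le (norm_nonneg _) (by positivity) ?_
    linarith

end PolarPoint

/-- Proposition B.1 of Marques–Neves.  There are a constant `C₀ > 0` and, for each
`r ∈ (0, π/4)`, constants `C₁ = C₁(r) > 0`, `ε₀ = ε₀(r) > 0` such that for all
`v = (1-s)(cos t · p + sin t · N)` with `p, N ∈ S³`, `⟪p,N⟫ = 0`, `0 < s ≤ ε₀`,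
`|t| ≤ ε₀`:

`B⁴_{R̄-C₀√|(s,t)|}(Q̄) ∩ S³ ⊆ F_v(B⁴_{√2}(-N) ∩ S³) ⊆ B⁴_{R̄+C₀√|(s,t)|}(Q̄) ∩ S³`

and `F_v(Δ(p,N,r) ∩ S³) ⊆ B⁴_{R̄+C₁√|(s,t)|}(Q̄) \ B⁴_{R̄-C₁√|(s,t)|}(Q̄)`,

where `|(s,t)| = √(s² + t²)`. -/
theorem confMap_cap_estimates :
    ∃ C₀ > (0:ℝ), ∀ r ∈ Set.Ioo (0:ℝ) (Real.pi / 4), ∃ C₁ > (0:ℝ), ∃ ε₀ > (0:ℝ),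
      ∀ p N : E4, p ∈ S3 → N ∈ S3 → ⟪p, N⟫ = 0 →
      ∀ s t : ℝ, 0 < s → s ≤ ε₀ → |t| ≤ ε₀ →
        (Metric.ball (Qbar p N s t) (Rbar s t - C₀ * Real.sqrt (Real.sqrt (s ^ 2 + t ^ 2)))
            ∩ S3 ⊆
          confMap ((1 - s) • (Real.cos t • p + Real.sin t • N)) ''
            (Metric.ball (-N) (Real.sqrt 2) ∩ S3)) ∧
        (confMap ((1 - s) • (Real.cos t • p + Real.sin t • N)) ''
            (Metric.ball (-N) (Real.sqrt 2) ∩ S3) ⊆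
          Metric.ball (Qbar p N s t) (Rbar s t + C₀ * Real.sqrt (Real.sqrt (s ^ 2 + t ^ 2)))
            ∩ S3) ∧
        (confMap ((1 - s) • (Real.cos t • p + Real.sin t • N)) '' (capDelta p N r ∩ S3) ⊆
          Metric.ball (Qbar p N s t) (Rbar s t + C₁ * Real.sqrt (Real.sqrt (s ^ 2 + t ^ 2))) \
            Metric.ball (Qbar p N s t)
              (Rbar s t - C₁ * Real.sqrt (Real.sqrt (s ^ 2 + t ^ 2)))) := by
  refine ⟨4, by norm_num, fun r ⟨hr0, hr⟩ => ⟨5 / √r, by positivity, r / 8, by positivity, ?_⟩⟩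
  intro p N hp hN hpN s t hs hsr htr
  rw [mem_S3] at hp hN
  have hr1 : r < 1 := by linarith [pi_lt_four]
  have hst : s ^ 2 + t ^ 2 ≤ 1 := by nlinarith [sq_abs t, abs_nonneg t]
  exact ⟨ball_Qbar_inter_S3_subset_image hp hN hpN hs hst,
    image_subset_ball_Qbar_inter_S3 hp hN hpN hs hst,
    image_capDelta_subset_annulus hp hN hpN hr0 hr1 hs hsr htr⟩
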